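/- arXiv:2309.03751 — 2 statements merged into one kernel-verified Lean document; each statement's English description precedes it below -/
import Mathlib

section
/- Swap change formula, case 4 (second nearest medoid replaced by a point closer than the current nearest): if m_i = n_2(o) and d(o,j) < d_1(o), then Δs̃_o = d_1(o)/d_2(o) − d(o,j)/d_1(o). -/
/-! Sorted, the distances from `o` to the medoids read `d₁ :: d₂ :: t`. Removing `d₂` and
prepending `d(o,j) < d₁` gives the sorted list `d(o,j) :: d₁ :: t` of the new medoid set, so
`s̃_o` moves from `1 - d₁/d₂` to `1 - d(o,j)/d₁`. -/

/-- distance from `x` to its `(n+1)`-th nearest medoid in `M` (0-indexed). -/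
noncomputable def nthDist {X : Type*} (d : X → X → ℝ) (M : Finset X) (x : X) (n : ℕ) : ℝ :=
  ((M.val.map (d x)).sort (· ≤ ·)).getD n 0

/-- Medoid Silhouette of a single point. -/
noncomputable def msil {X : Type*} (d : X → X → ℝ) (M : Finset X) (x : X) : ℝ :=
  if nthDist d M x 0 = 0 ∧ nthDist d M x 1 = 0 then 1
  else 1 - nthDist d M x 0 / nthDist d M x 1

/-- Average Medoid Silhouette. -/
noncomputable def AMS {X : Type*} [Fintype X] (d : X → X → ℝ) (M : Finset X) : ℝ :=
  (∑ x : X, msil d M x) / (Fintype.card X)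

/-- `x ∼_M y`: x and y share a nearest medoid in `M`. -/
def simM {X : Type*} (d : X → X → ℝ) (M : Finset X) (x y : X) : Prop :=
  ∃ m ∈ M, d x m = nthDist d M x 0 ∧ d y m = nthDist d M y 0

namespace Multiset

variable {α : Type*} [LinearOrder α]

theorem sort_eq_of_coe_eq {s : Multiset α} {l : List α} (hl : l.Pairwise (· ≤ ·))
    (h : (l : Multiset α) = s) : s.sort (· ≤ ·) = l := by
  subst h
  exact List.mergeSort_eq_self _ (by simpa using hl)

theorem exists_sort_eq_cons_cons {s : Multiset α} (hs : 2 ≤ card s) :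
    ∃ a b t, s.sort (· ≤ ·) = a :: b :: t := by
  have hlen := length_sort (r := (· ≤ ·)) (s := s)
  match s.sort (· ≤ ·), hlen with
  | a :: b :: t, _ => exact ⟨a, b, t, rfl⟩
  | [], h | [_], h => simp at h; omega

theorem sort_cons_erase_of_sort_eq {s : Multiset α} {a b c : α} {t : List α}
    (hs : s.sort (· ≤ ·) = a :: b :: t) (hca : c ≤ a) :
    (c ::ₘ s.erase b).sort (· ≤ ·) = c :: a :: t := by
  have hsorted := hs ▸ pairwise_sort s (· ≤ ·)
  simp only [List.pairwise_cons, List.mem_cons, forall_eq_or_imp] at hsorted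
  obtain ⟨⟨-, hat⟩, -, ht⟩ := hsorted
  apply sort_eq_of_coe_eq
  · simp only [List.pairwise_cons, List.mem_cons, forall_eq_or_imp]
    exact ⟨⟨hca, fun x hx => hca.trans (hat x hx)⟩, hat, ht⟩
  · have hs' : s = b ::ₘ a ::ₘ (t : Multiset α) := by
      rw [cons_swap, ← sort_eq s (· ≤ ·), hs]; rfl
    rw [hs', erase_cons_head]; rfl

end Multiset

theorem msil_eq_of_pos {X : Type*} {d : X → X → ℝ} {M : Finset X} {x : X}
    (h : 0 < nthDist d M x 0) : msil d M x = 1 - nthDist d M x 0 / nthDist d M x 1 :=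
  if_neg fun h0 => h.ne' h0.1

theorem swap_change_case4_general {X : Type*} [DecidableEq X] (d : X → X → ℝ) (M : Finset X)
    (hk : 3 ≤ M.card) (o m j : X) (hm : m ∈ M) (hj : j ∉ M)
    (hpos : 0 < nthDist d M o 0) (hposj : 0 < d o j)
    (hsecond : d o m = nthDist d M o 1)
    (hoj : d o j < nthDist d M o 0) :
    msil d (insert j (M.erase m)) o - msil d M o
      = nthDist d M o 0 / nthDist d M o 1 - d o j / nthDist d M o 0 := by
  obtain ⟨a, b, t, hsort⟩ := Multiset.exists_sort_eq_cons_cons (s := M.val.map (d o))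
    (by simpa using Nat.le_of_succ_le hk)
  have h0 : nthDist d M o 0 = a := by rw [nthDist, hsort]; rfl
  have h1 : nthDist d M o 1 = b := by rw [nthDist, hsort]; rfl
  have hsort' : ((insert j (M.erase m)).val.map (d o)).sort (· ≤ ·) = d o j :: a :: t := by
    rw [Finset.insert_val_of_notMem (fun h => hj (Finset.mem_of_mem_erase h)), Finset.erase_val,
      Multiset.map_cons, Multiset.map_erase_of_mem _ _ hm, hsecond, h1]
    exact Multiset.sort_cons_erase_of_sort_eq hsort (h0 ▸ hoj.le)
  have h0' : nthDist d (insert j (M.erase m)) o 0 = d o j := by rw [nthDist, hsort']; rfl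
  have h1' : nthDist d (insert j (M.erase m)) o 1 = a := by rw [nthDist, hsort']; rfl
  rw [msil_eq_of_pos (h0' ▸ hposj), msil_eq_of_pos hpos, h0, h1, h0', h1']
  ring

/-- swap change, case 4: the second nearest medoid is replaced by a point
closer than the nearest; change equals d₁/d₂ − d(o,j)/d₁. -/
theorem swap_change_case4 {X : Type*} [Fintype X] [DecidableEq X] (d : X → X → ℝ) (M : Finset X)
    (hk : 3 ≤ M.card) (o m j : X) (hm : m ∈ M) (hj : j ∉ M)
    (hinj : Set.InjOn (d o) ↑M)
    (hpos : 0 < nthDist d M o 0) (hposj : 0 < d o j)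
    (hsecond : d o m = nthDist d M o 1)
    (hoj : d o j < nthDist d M o 0) :
    msil d (insert j (M.erase m)) o - msil d M o
      = nthDist d M o 0 / nthDist d M o 1 - d o j / nthDist d M o 0 :=
  swap_change_case4_general d M hk o m j hm hj hpos hposj hsecond hoj
end

section
/- Swap change formula, case 5 (neither nearest nor second nearest replaced, new medoid becomes nearest): if m_i ∉ {n_1(o), n_2(o)} and d(o,j) < d_1(o), then Δs̃_o = d_1(o)/d_2(o) − d(o,j)/d_1(o). -/
/-!
Sorting the distances from `o` to the medoids, the swap deletes one entry lying beyond the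
second place and puts `d(o,j)` in front, since it is smaller than every old distance. So the
new nearest distance is `d(o,j)` and the new second nearest is the old nearest `d₁`, and the
formula is `(1 - d₁/d₂) ↦ (1 - d(o,j)/d₁)`.
-/

theorem Multiset.sort_erase {α : Type*} [LinearOrder α] (s : Multiset α) (a : α) :
    (s.erase a).sort (· ≤ ·) = (s.sort (· ≤ ·)).erase a := by
  refine List.Perm.eq_of_pairwise' (pairwise_sort _ _) ((pairwise_sort _ _).erase _) ?_
  rw [← coe_eq_coe, ← coe_erase, sort_eq, sort_eq]

theorem Finset.map_val_insert_erase {α β : Type*} [DecidableEq α] [DecidableEq β] (f : α → β)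
    {s : Finset α} {a b : α} (ha : a ∈ s) (hb : b ∉ s) :
    (insert b (s.erase a)).val.map f = f b ::ₘ (s.val.map f).erase (f a) := by
  rw [insert_val_of_notMem fun h => hb (mem_of_mem_erase h), Multiset.map_cons, erase_val,
    Multiset.map_erase_of_mem _ _ ha]

theorem List.Pairwise.getD_zero_le {α : Type*} [Preorder α] {l : List α}
    (hl : l.Pairwise (· ≤ ·)) (d : α) {a : α} (ha : a ∈ l) : l.getD 0 d ≤ a := by
  cases l with
  | nil => simp at ha
  | cons b t =>
    rcases List.mem_cons.1 ha with rfl | h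
    · exact le_rfl
    · exact (List.pairwise_cons.1 hl).1 a h

theorem List.Pairwise.getD_le_getD {α : Type*} [Preorder α] {l : List α}
    (hl : l.Pairwise (· ≤ ·)) (d : α) {i j : ℕ} (hij : i ≤ j) (hj : j < l.length) :
    l.getD i d ≤ l.getD j d := by
  rw [List.getD_eq_getElem _ _ (hij.trans_lt hj), List.getD_eq_getElem _ _ hj]
  rcases hij.eq_or_lt with rfl | hlt
  · exact le_rfl
  · exact List.pairwise_iff_getElem.1 hl i j _ hj hlt

section SwapDistances

variable {X : Type*} (d : X → X → ℝ) (M : Finset X) (x : X)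

noncomputable def distList : List ℝ := (M.val.map (d x)).sort (· ≤ ·)

theorem nthDist_eq_getD (n : ℕ) : nthDist d M x n = (distList d M x).getD n 0 := rfl

theorem mem_distList {y : X} (hy : y ∈ M) : d x y ∈ distList d M x :=
  (Multiset.mem_sort _).2 (Multiset.mem_map_of_mem _ hy)

theorem distList_pairwise : (distList d M x).Pairwise (· ≤ ·) := Multiset.pairwise_sort _ _

theorem length_distList : (distList d M x).length = M.card := by
  rw [distList, Multiset.length_sort, Multiset.card_map, Finset.card_def]

theorem nthDist_zero_le {y : X} (hy : y ∈ M) : nthDist d M x 0 ≤ d x y :=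
  (distList_pairwise d M x).getD_zero_le 0 (mem_distList d M x hy)

theorem nthDist_zero_le_one (hM : 2 ≤ M.card) : nthDist d M x 0 ≤ nthDist d M x 1 :=
  (distList_pairwise d M x).getD_le_getD 0 zero_le_one (by rw [length_distList]; omega)

variable [DecidableEq X] {M} {m j : X}

theorem distList_swap (hm : m ∈ M) (hj : j ∉ M) (hnear : d x j ≤ nthDist d M x 0) :
    distList d (insert j (M.erase m)) x = d x j :: (distList d M x).erase (d x m) := by
  rw [distList, Finset.map_val_insert_erase _ hm hj, Multiset.sort_cons, Multiset.sort_erase,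
    distList]
  intro y hy
  obtain ⟨z, hz, rfl⟩ := Multiset.mem_map.1 (Multiset.mem_of_mem_erase hy)
  exact hnear.trans (nthDist_zero_le d M x hz)

theorem nthDist_swap_zero (hm : m ∈ M) (hj : j ∉ M) (hnear : d x j ≤ nthDist d M x 0) :
    nthDist d (insert j (M.erase m)) x 0 = d x j := by
  rw [nthDist_eq_getD, distList_swap d x hm hj hnear]
  rfl

theorem nthDist_swap_one (hm : m ∈ M) (hj : j ∉ M) (hnear : d x j ≤ nthDist d M x 0)
    (hfar : nthDist d M x 0 ≠ d x m) :
    nthDist d (insert j (M.erase m)) x 1 = nthDist d M x 0 := by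
  have hmem := mem_distList d M x hm
  rw [nthDist_eq_getD, distList_swap d x hm hj hnear, nthDist_eq_getD]
  rw [nthDist_eq_getD] at hfar
  generalize distList d M x = s at hmem hfar ⊢
  cases s with
  | nil => simp at hmem
  | cons a t => rw [List.erase_cons_tail (by simpa using hfar)]; rfl

end SwapDistances

theorem msil_eq_of_ne_zero {X : Type*} {d : X → X → ℝ} {M : Finset X} {x : X}
    (h : nthDist d M x 1 ≠ 0) : msil d M x = 1 - nthDist d M x 0 / nthDist d M x 1 :=
  if_neg fun h' => h h'.2

theorem swap_change_case5_general {X : Type*} [DecidableEq X] (d : X → X → ℝ) (M : Finset X)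
    (hk : 3 ≤ M.card) (o m j : X) (hm : m ∈ M) (hj : j ∉ M)
    (hpos : 0 < nthDist d M o 0)
    (hfar : nthDist d M o 1 < d o m)
    (hoj : d o j < nthDist d M o 0) :
    msil d (insert j (M.erase m)) o - msil d M o
      = nthDist d M o 0 / nthDist d M o 1 - d o j / nthDist d M o 0 := by
  have h01 := nthDist_zero_le_one d M o (by omega)
  have hm_ne : nthDist d M o 0 ≠ d o m := (h01.trans_lt hfar).ne
  have hnew1 := nthDist_swap_one d o hm hj hoj.le hm_ne
  rw [msil_eq_of_ne_zero (hnew1 ▸ hpos.ne'), msil_eq_of_ne_zero (hpos.trans_le h01).ne',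
    nthDist_swap_zero d o hm hj hoj.le, hnew1]
  ring

/-- swap change, case 5: a medoid that is neither the nearest nor the
second nearest of o is replaced, and the new medoid becomes the nearest;
change equals d₁/d₂ − d(o,j)/d₁. -/
theorem swap_change_case5 {X : Type*} [Fintype X] [DecidableEq X] (d : X → X → ℝ) (M : Finset X)
    (hk : 3 ≤ M.card) (o m j : X) (hm : m ∈ M) (hj : j ∉ M)
    (hinj : Set.InjOn (d o) ↑M)
    (hpos : 0 < nthDist d M o 0) (hposj : 0 < d o j)
    (hfar : nthDist d M o 1 < d o m)
    (hoj : d o j < nthDist d M o 0) :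
    msil d (insert j (M.erase m)) o - msil d M o
      = nthDist d M o 0 / nthDist d M o 1 - d o j / nthDist d M o 0 :=
  swap_change_case5_general d M hk o m j hm hj hpos hfar hoj
end
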